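/- arXiv:2103.02821 — 2 statements merged into one kernel-verified Lean document; each statement's English description precedes it below -/
import Mathlib

section
/- If an infinite run R over a finite transition system T satisfies an LTL formula φ (accepted by a Büchi automaton B via the product construction) and minimizes the limsup cycle-cost, then there exists a run R_c in prefix-suffix (lasso) form R_c = R_pre · (R_suf)^ω that also satisfies φ and achieves the same minimal cost. -/
open Filter

/-- `R` is an infinite run of a transition system with transition relation `tr`
starting at `s0`. -/
def IsRun {S : Type} (tr : S → S → Prop) (s0 : S) (R : ℕ → S) : Prop :=
  R 0 = s0 ∧ ∀ i, tr (R i) (R (i + 1))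

/-- Büchi acceptance of the run `R` via the product construction: there is a run of
the automaton (reading the states of `R`) starting at `q0` that visits the accepting
set `acc` infinitely often. -/
def BuchiAccepts {S Q : Type} (δ : Q → S → Q → Prop) (q0 : Q) (acc : Set Q)
    (R : ℕ → S) : Prop :=
  ∃ ρ : ℕ → Q, ρ 0 = q0 ∧ (∀ i, δ (ρ i) (R i) (ρ (i + 1))) ∧
    ∀ N, ∃ n ≥ N, ρ n ∈ acc

/-- The limsup cycle-cost of a run `R` with respect to the distinguished state `f`:
the limsup, over `i`, of the sum of edge weights between the `i`-th and `(i+1)`-st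
occurrence of `f` on `R`. -/
noncomputable def cycleCost {S : Type} (w : S → S → ℕ) (f : S) (R : ℕ → S) : ℕ∞ :=
  Filter.atTop.limsup fun i =>
    ((∑ k ∈ Finset.Ico (Nat.nth (fun k => R k = f) i)
        (Nat.nth (fun k => R k = f) (i + 1)), w (R k) (R (k + 1))) : ℕ∞)

/-- `R` is a lasso (prefix-suffix) run: eventually periodic. -/
def IsLasso {S : Type} (R : ℕ → S) : Prop :=
  ∃ p r : ℕ, 0 < r ∧ ∀ i ≥ p, R (i + r) = R i

namespace LassoAux

def wrap (i r k : ℕ) : ℕ := if k < i then k else i + (k - i) % r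

lemma wrap_id {i r k : ℕ} (h : k < i + r) : wrap i r k = k := by
  unfold wrap
  split
  · rfl
  · rename_i hk
    have : (k - i) % r = k - i := Nat.mod_eq_of_lt (by omega)
    omega

lemma wrap_ge {i r k : ℕ} (h : i ≤ k) : wrap i r k = i + (k - i) % r := by
  unfold wrap
  rw [if_neg (by omega)]

lemma wrap_add_r {i r k : ℕ} (h : i ≤ k) : wrap i r (k + r) = wrap i r k := by
  rw [wrap_ge (by omega), wrap_ge h]
  congr 1
  have h2 : k + r - i = (k - i) + r := by omega
  rw [h2, Nat.add_mod_right]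

lemma wrap_add_mul {i r a : ℕ} (hia : i ≤ a) (ha : a < i + r) (t : ℕ) :
    wrap i r (a + t * r) = a := by
  rw [wrap_ge (by omega)]
  have h2 : a + t * r - i = (a - i) + t * r := by omega
  rw [h2, Nat.add_mul_mod_self_right, Nat.mod_eq_of_lt (by omega)]
  omega

lemma wrap_succ {i r : ℕ} (hr : 0 < r) (k : ℕ) :
    wrap i r (k + 1) = wrap i r k + 1 ∨ (wrap i r k + 1 = i + r ∧ wrap i r (k + 1) = i) := by
  rcases lt_or_ge k i with h | h
  · left
    rw [wrap_id (show k < i + r by omega)]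
    rcases Nat.lt_or_ge (k + 1) i with h1 | h1
    · rw [wrap_id (by omega)]
    · have h2 : k + 1 = i := by omega
      rw [wrap_ge h1, h2]
      simp
  · have hm : (k - i) % r < r := Nat.mod_lt _ hr
    have hkey : (k + 1 - i) % r = ((k - i) % r + 1) % r := by
      have h2 : k + 1 - i = (k - i) + 1 := by omega
      rw [h2, ← Nat.mod_add_mod]
    rcases Nat.lt_or_ge ((k - i) % r + 1) r with h1 | h1
    · left
      rw [wrap_ge (by omega), wrap_ge h, hkey, Nat.mod_eq_of_lt h1]
      omega
    · have h1' : (k - i) % r + 1 = r := by omega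
      right
      refine ⟨by rw [wrap_ge h]; omega, ?_⟩
      rw [wrap_ge (by omega), hkey, h1', Nat.mod_self]
      omega

lemma wrap_succ_apply {α : Type*} {i r : ℕ} (hr : 0 < r) (g : ℕ → α)
    (hg : g (i + r) = g i) (k : ℕ) :
    g (wrap i r (k + 1)) = g (wrap i r k + 1) := by
  rcases wrap_succ (i := i) hr k with h | ⟨h1, h2⟩
  · rw [h]
  · rw [h2, h1, hg]



lemma nth_consecutive {q : ℕ → Prop} {m c : ℕ}
    (h1 : Nat.nth q m < c) (h2 : c < Nat.nth q (m + 1)) : ¬ q c := fun hc =>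
  absurd (Nat.le_nth_of_lt_nth_succ h2 hc) (not_le.2 h1)

lemma count_next {q : ℕ → Prop} [DecidablePred q] {n b : ℕ} (hn : q n) (hb : q b)
    (hnb : n < b) (hno : ∀ c, n < c → c < b → ¬ q c) :
    Nat.count q b = Nat.count q n + 1 := by
  have key : ∀ c, n + 1 ≤ c → c ≤ b → Nat.count q c = Nat.count q n + 1 := by
    intro c hc
    induction c, hc using Nat.le_induction with
    | base => intro _; rw [Nat.count_succ, if_pos hn]
    | succ c hc ih =>
        intro hcb
        rw [Nat.count_succ, if_neg (hno c (by omega) (by omega)), ih (by omega)]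
  exact key b (by omega) le_rfl

lemma unbounded_infinite {s : Set ℕ} (h : ∀ N, ∃ n ≥ N, n ∈ s) : s.Infinite :=
  Set.infinite_of_forall_exists_gt fun a => by
    obtain ⟨n, hn, hmem⟩ := h (a + 1)
    exact ⟨n, hmem, by omega⟩

lemma cycleCost_finite_zero {S : Type} (w : S → S → ℕ) (f : S) (X : ℕ → S)
    (h : {k | X k = f}.Finite) : cycleCost w f X = 0 := by
  refine le_antisymm ?_ zero_le
  rw [cycleCost]
  apply Filter.limsup_le_of_le (by isBoundedDefault)
  filter_upwards [eventually_ge_atTop h.toFinset.card] with m hm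
  have e1 : Nat.nth (fun k => X k = f) m = 0 := Nat.nth_eq_zero.2 (Or.inr ⟨h, hm⟩)
  have e2 : Nat.nth (fun k => X k = f) (m + 1) = 0 := Nat.nth_eq_zero.2 (Or.inr ⟨h, by omega⟩)
  rw [e1, e2]
  simp

lemma cycleCost_le_of_segments {S : Type} (w : S → S → ℕ) (f : S) (X : ℕ → S) {L : ℕ∞} {N : ℕ}
    (h : ∀ m, N ≤ m →
      ((∑ k ∈ Finset.Ico (Nat.nth (fun k => X k = f) m) (Nat.nth (fun k => X k = f) (m + 1)),
        w (X k) (X (k + 1))) : ℕ∞) ≤ L) :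
    cycleCost w f X ≤ L := by
  rw [cycleCost]
  apply Filter.limsup_le_of_le (by isBoundedDefault)
  filter_upwards [eventually_ge_atTop N] with m hm using h m hm

lemma segment_sum_le {S : Type} (w : S → S → ℕ) (f : S) (R : ℕ → S)
    (hL : cycleCost w f R ≠ ⊤) (hinf : {k | R k = f}.Infinite) :
    ∃ M : ℕ, ∀ n b : ℕ, M ≤ n → R n = f → R b = f → n < b →
      (∀ c, n < c → c < b → R c ≠ f) →
      ((∑ k ∈ Finset.Ico n b, w (R k) (R (k + 1))) : ℕ∞) ≤ cycleCost w f R := by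
  classical
  set L := cycleCost w f R with hLdef
  have hlt : cycleCost w f R < L + 1 := (ENat.lt_add_one_iff hL).2 le_rfl
  rw [cycleCost] at hlt
  have hev := Filter.eventually_lt_of_limsup_lt hlt
  obtain ⟨N0, hN0⟩ := eventually_atTop.1 hev
  refine ⟨Nat.nth (fun k => R k = f) N0 + 1, fun n b hn hpn hpb hnb hno => ?_⟩
  set p := fun k => R k = f with hp
  have hcount : N0 ≤ Nat.count p n := by
    have h1 : Nat.count p (Nat.nth p N0 + 1) = N0 + 1 := by
      rw [Nat.count_succ, Nat.count_nth_of_infinite hinf,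
        if_pos (Nat.nth_mem_of_infinite hinf N0)]
    have h2 := Nat.count_monotone p hn
    omega
  have e1 : Nat.nth p (Nat.count p n) = n := Nat.nth_count hpn
  have e2 : Nat.nth p (Nat.count p n + 1) = b := by
    rw [← count_next hpn hpb hnb hno]
    exact Nat.nth_count hpb
  have hfin := hN0 (Nat.count p n) hcount
  rw [e1, e2] at hfin
  exact (ENat.lt_add_one_iff hL).1 hfin

section Periodize

variable {S Q : Type} {tr : S → S → Prop} {s0 : S} {δ : Q → S → Q → Prop} {q0 : Q}
  {acc : Set Q} {R : ℕ → S} {ρ : ℕ → Q}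

lemma periodize_isRun (hR : IsRun tr s0 R) {i j : ℕ} (hij : i < j) (hRij : R j = R i) :
    IsRun tr s0 (fun k => R (wrap i (j - i) k)) := by
  have hr : 0 < j - i := by omega
  have hj : i + (j - i) = j := by omega
  constructor
  · show R (wrap i (j - i) 0) = s0
    rw [wrap_id (by omega)]
    exact hR.1
  · intro k
    show tr (R (wrap i (j - i) k)) (R (wrap i (j - i) (k + 1)))
    rw [wrap_succ_apply hr R (by rw [hj, hRij]) k]
    exact hR.2 (wrap i (j - i) k)

lemma periodize_accepts (hρ0 : ρ 0 = q0) (hδ : ∀ k, δ (ρ k) (R k) (ρ (k + 1)))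
    {i j a : ℕ} (hij : i < j) (hRij : R j = R i) (hρij : ρ j = ρ i)
    (hia : i ≤ a) (haj : a < j) (hacc : ρ a ∈ acc) :
    BuchiAccepts δ q0 acc (fun k => R (wrap i (j - i) k)) := by
  have hr : 0 < j - i := by omega
  have hj : i + (j - i) = j := by omega
  refine ⟨fun k => ρ (wrap i (j - i) k), ?_, ?_, ?_⟩
  · show ρ (wrap i (j - i) 0) = q0
    rw [wrap_id (by omega)]
    exact hρ0
  · intro k
    show δ (ρ (wrap i (j - i) k)) (R (wrap i (j - i) k)) (ρ (wrap i (j - i) (k + 1)))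
    rw [wrap_succ_apply hr ρ (by rw [hj, hρij]) k]
    exact hδ (wrap i (j - i) k)
  · intro N
    refine ⟨a + N * (j - i), ?_, ?_⟩
    · have : N ≤ N * (j - i) := Nat.le_mul_of_pos_right N hr
      omega
    · show ρ (wrap i (j - i) (a + N * (j - i))) ∈ acc
      rw [wrap_add_mul hia (by omega)]
      exact hacc

lemma periodize_isLasso {α : Type} (g : ℕ → α) {i r : ℕ} (hr : 0 < r) :
    IsLasso (fun k => g (wrap i r k)) :=
  ⟨i, r, hr, fun k hk => by
    show g (wrap i r (k + r)) = g (wrap i r k)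
    rw [wrap_add_r hk]⟩

end Periodize

lemma star' {S : Type} (w : S → S → ℕ) (f : S) (R : ℕ → S) {L : ℕ∞} {M i j : ℕ}
    (hseg : ∀ n b : ℕ, M ≤ n → R n = f → R b = f → n < b →
      (∀ c, n < c → c < b → R c ≠ f) →
      ((∑ k ∈ Finset.Ico n b, w (R k) (R (k + 1))) : ℕ∞) ≤ L)
    (hMi : M ≤ i) (hij : i < j) (hRij : R j = R i) (hfi : R i = f) :
    ∀ a b : ℕ, i ≤ a → a < b → R (wrap i (j - i) a) = f → R (wrap i (j - i) b) = f →
      (∀ c, a < c → c < b → R (wrap i (j - i) c) ≠ f) →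
      ((∑ k ∈ Finset.Ico a b, w (R (wrap i (j - i) k)) (R (wrap i (j - i) (k + 1)))) : ℕ∞)
        ≤ L := by
  have hr : 0 < j - i := by omega
  have hj : i + (j - i) = j := by omega
  have hwj : wrap i (j - i) j = i := by
    rw [wrap_ge (by omega)]
    simp [Nat.mod_self]
  have hRw : ∀ k, k ≤ j → R (wrap i (j - i) k) = R k := by
    intro k hk
    rcases lt_or_eq_of_le hk with hk1 | hk1
    · rw [wrap_id (by omega)]
    · rw [hk1, hwj, hRij]
  intro a
  induction a using Nat.strong_induction_on with
  | _ a IH =>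
    intro b hia hab ha hb hno
    rcases lt_or_ge a j with haj | haj
    · -- base case: the whole segment lies in [i, j]
      have hbj : b ≤ j := by
        by_contra hbj
        push_neg at hbj
        exact hno j haj hbj (by rw [hRw j le_rfl, hRij, hfi])
      have hsum : (∑ k ∈ Finset.Ico a b,
            ((w (R (wrap i (j - i) k)) (R (wrap i (j - i) (k + 1)))) : ℕ∞))
          = ∑ k ∈ Finset.Ico a b, ((w (R k) (R (k + 1))) : ℕ∞) := by
        apply Finset.sum_congr rfl
        intro k hk
        rw [Finset.mem_Ico] at hk
        rw [hRw k (by omega), hRw (k + 1) (by omega)]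
      rw [hsum]
      refine hseg a b (le_trans hMi hia) ?_ ?_ hab ?_
      · rw [← hRw a (by omega)]; exact ha
      · rw [← hRw b hbj]; exact hb
      · intro c h1 h2
        rw [← hRw c (by omega)]
        exact hno c h1 h2
    · -- inductive step: shift down by one period
      set r := j - i with hrdef
      have hper : ∀ k, i ≤ k → R (wrap i r (k + r)) = R (wrap i r k) := fun k hk => by
        rw [wrap_add_r hk]
      have har : i ≤ a - r := by omega
      have ha' : R (wrap i r (a - r)) = f := by
        rw [← hper (a - r) har, show a - r + r = a by omega]
        exact ha
      have hb' : R (wrap i r (b - r)) = f := by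
        rw [← hper (b - r) (by omega), show b - r + r = b by omega]
        exact hb
      have hno' : ∀ c, a - r < c → c < b - r → R (wrap i r c) ≠ f := by
        intro c h1 h2
        have := hno (c + r) (by omega) (by omega)
        rwa [hper c (by omega)] at this
      have hsum : (∑ k ∈ Finset.Ico (a - r) (b - r),
            ((w (R (wrap i r k)) (R (wrap i r (k + 1)))) : ℕ∞))
          = ∑ k ∈ Finset.Ico a b, ((w (R (wrap i r k)) (R (wrap i r (k + 1)))) : ℕ∞) := by
        rw [Finset.sum_Ico_eq_sum_range, Finset.sum_Ico_eq_sum_range]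
        rw [show b - r - (a - r) = b - a by omega]
        apply Finset.sum_congr rfl
        intro k _
        have hik : i ≤ a - r + k := by omega
        have e1 : wrap i r (a + k) = wrap i r (a - r + k) := by
          rw [show a + k = (a - r + k) + r from by omega, wrap_add_r hik]
        have e2 : wrap i r (a + k + 1) = wrap i r (a - r + k + 1) := by
          rw [show a + k + 1 = (a - r + k + 1) + r from by omega, wrap_add_r (by omega)]
        rw [e1, e2]
      rw [← hsum]
      exact IH (a - r) (by omega) (b - r) har (by omega) ha' hb' hno'

lemma exists_pair {S Q : Type} [Finite S] [Finite Q] (R : ℕ → S) (ρ : ℕ → Q) {T : Set ℕ}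
    (hT : T.Infinite) :
    ∃ F : Set ℕ, F.Infinite ∧ F ⊆ T ∧ ∃ s q, ∀ n ∈ F, R n = s ∧ ρ n = q := by
  classical
  let e := hT.natEmbedding
  obtain ⟨⟨s, q⟩, hsq⟩ := Finite.exists_infinite_fiber (fun n : ℕ => (R (e n), ρ (e n)))
  have hU : ((fun n : ℕ => (R (e n), ρ (e n))) ⁻¹' {(s, q)}).Infinite :=
    Set.infinite_coe_iff.1 hsq
  have hinj : Function.Injective (fun n : ℕ => ((e n : ℕ))) :=
    fun a b hab => e.injective (Subtype.ext hab)
  refine ⟨(fun n : ℕ => ((e n : ℕ))) '' ((fun n : ℕ => (R (e n), ρ (e n))) ⁻¹' {(s, q)}),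
    Set.Infinite.image (hinj.injOn) hU, ?_, s, q, ?_⟩
  · rintro _ ⟨n, _, rfl⟩
    exact (e n).2
  · rintro _ ⟨n, hn, rfl⟩
    simp only [Set.mem_preimage, Set.mem_singleton_iff, Prod.mk.injEq] at hn
    exact hn

end LassoAux

open LassoAux

/-- if an infinite run `R` of a finite transition system satisfies the
specification (Büchi acceptance via the product construction) and minimizes the
limsup cycle-cost, then there is a lasso run `Rc` that also satisfies the
specification and achieves the same minimal cost. -/
theorem exists_lasso_of_optimal_run {S Q : Type} [Finite S] [Finite Q]
    (tr : S → S → Prop) (s0 : S) (w : S → S → ℕ)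
    (δ : Q → S → Q → Prop) (q0 : Q) (acc : Set Q) (f : S) (R : ℕ → S)
    (hR : IsRun tr s0 R) (hAcc : BuchiAccepts δ q0 acc R)
    (hmin : ∀ R' : ℕ → S, IsRun tr s0 R' → BuchiAccepts δ q0 acc R' →
      cycleCost w f R ≤ cycleCost w f R') :
    ∃ Rc : ℕ → S, IsRun tr s0 Rc ∧ BuchiAccepts δ q0 acc Rc ∧ IsLasso Rc ∧
      cycleCost w f Rc = cycleCost w f R := by
  classical
  obtain ⟨hR0, hRstep⟩ := hR
  obtain ⟨ρ, hρ0, hδ, haccinf⟩ := hAcc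
  have hAset : {n | ρ n ∈ acc}.Infinite := unbounded_infinite haccinf
  by_cases hfin : {k | R k = f}.Finite
  · -- Case I: `f` occurs only finitely often on `R`; both costs are zero.
    obtain ⟨N, hN⟩ : ∃ N, ∀ k, R k = f → k < N := by
      obtain ⟨N, hN⟩ := hfin.bddAbove
      exact ⟨N + 1, fun k hk => by have := hN hk; omega⟩
    obtain ⟨F, hFinf, hFsub, s, q, hFval⟩ := exists_pair R ρ hAset
    obtain ⟨i, hiF, hiN⟩ := hFinf.exists_gt N
    obtain ⟨j, hjF, hij⟩ := hFinf.exists_gt i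
    have hRij : R j = R i := by rw [(hFval i hiF).1, (hFval j hjF).1]
    have hρij : ρ j = ρ i := by rw [(hFval i hiF).2, (hFval j hjF).2]
    refine ⟨fun k => R (wrap i (j - i) k), periodize_isRun ⟨hR0, hRstep⟩ hij hRij,
      periodize_accepts hρ0 hδ hij hRij hρij le_rfl hij (hFsub hiF),
      periodize_isLasso R (by omega), ?_⟩
    have h1 : cycleCost w f (fun k => R (wrap i (j - i) k)) = 0 := by
      apply cycleCost_finite_zero
      apply Set.Finite.subset (Set.finite_Iio i)
      intro k hk
      simp only [Set.mem_setOf_eq] at hk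
      simp only [Set.mem_Iio]
      by_contra hki
      push_neg at hki
      have hwge : i ≤ wrap i (j - i) k := by rw [wrap_ge hki]; omega
      have := hN _ hk
      omega
    rw [h1, cycleCost_finite_zero w f R hfin]
  · have hpinf : {k | R k = f}.Infinite := hfin
    rcases eq_or_ne (cycleCost w f R) ⊤ with htop | htop
    · -- Case II: the optimal cost is infinite; any accepted lasso works.
      obtain ⟨F, hFinf, hFsub, s, q, hFval⟩ := exists_pair R ρ hAset
      obtain ⟨i, hiF, _⟩ := hFinf.exists_gt 0
      obtain ⟨j, hjF, hij⟩ := hFinf.exists_gt i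
      have hRij : R j = R i := by rw [(hFval i hiF).1, (hFval j hjF).1]
      have hρij : ρ j = ρ i := by rw [(hFval i hiF).2, (hFval j hjF).2]
      have hrun := periodize_isRun (tr := tr) (s0 := s0) ⟨hR0, hRstep⟩ hij hRij
      have hacc := periodize_accepts (δ := δ) (q0 := q0) (acc := acc) hρ0 hδ hij hRij hρij
        le_rfl hij (hFsub hiF)
      refine ⟨fun k => R (wrap i (j - i) k), hrun, hacc, periodize_isLasso R (by omega), ?_⟩
      apply le_antisymm
      · rw [htop]; exact le_top
      · exact hmin _ hrun hacc
    · -- Case III: finite optimal cost and infinitely many `f`s.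
      obtain ⟨M, hseg⟩ := segment_sum_le w f R htop hpinf
      obtain ⟨F, hFinf, hFsub, s, q, hFval⟩ := exists_pair R ρ hpinf
      obtain ⟨i, hiF, hiM⟩ := hFinf.exists_gt M
      obtain ⟨a, haA, hia⟩ := hAset.exists_gt i
      obtain ⟨j, hjF, haj⟩ := hFinf.exists_gt a
      have hij : i < j := by omega
      have hfi : R i = f := hFsub hiF
      have hRij : R j = R i := by rw [(hFval i hiF).1, (hFval j hjF).1]
      have hρij : ρ j = ρ i := by rw [(hFval i hiF).2, (hFval j hjF).2]
      have hrun := periodize_isRun (tr := tr) (s0 := s0) ⟨hR0, hRstep⟩ hij hRij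
      have hacc := periodize_accepts (δ := δ) (q0 := q0) (acc := acc) hρ0 hδ hij hRij hρij
        (by omega) (by omega) haA
      refine ⟨fun k => R (wrap i (j - i) k), hrun, hacc, periodize_isLasso R (by omega), ?_⟩
      apply le_antisymm _ (hmin _ hrun hacc)
      have hqinf : {k | R (wrap i (j - i) k) = f}.Infinite := by
        apply unbounded_infinite
        intro N
        refine ⟨i + N * (j - i), ?_, ?_⟩
        · have : N ≤ N * (j - i) := Nat.le_mul_of_pos_right N (by omega)
          omega
        · simp only [Set.mem_setOf_eq]
          rw [wrap_add_mul le_rfl (by omega)]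
          exact hfi
      apply cycleCost_le_of_segments (N := i)
      intro m hm
      exact star' w f R hseg (by omega) hij hRij hfi _ _
        (le_trans hm ((Nat.nth_strictMono hqinf).id_le m))
        ((Nat.nth_lt_nth hqinf).2 (by omega))
        (Nat.nth_mem_of_infinite hqinf m) (Nat.nth_mem_of_infinite hqinf (m + 1))
        (fun c hc1 hc2 => nth_consecutive hc1 hc2)
end

section
/- Suppose two finite runs ρ1 and ρ2 each consist of k1 (respectively k2) transitions labeled by a negative condition c_neg followed by one transition labeled by a positive condition c_pos, with k1 ≤ k2, and the initial state of ρ1 has a c_neg-labeled self-loop. Then ρ1 can be extended, by inserting k2 − k1 copies of the self-loop transition at its start, to a run ρ1' of the same length as ρ2, with the same final state, the same transition-label sequence as ρ2, and the same total cost as ρ1 (self-loops have cost 0). -/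
/-- if run `ρ1` consists of `k1` transitions labeled `cneg` followed by
one `cpos` transition, run `ρ2` of `k2` `cneg` transitions followed by one `cpos`
transition, `k1 ≤ k2`, and the initial state of `ρ1` has a `cneg`-labeled self-loop
(of weight 0), then `ρ1` extends, by waiting `k2 - k1` steps at its start, to a run
`ρ1'` of the same length and transition-label sequence as `ρ2`, the same final state
as `ρ1`, and the same total cost as `ρ1`. -/
theorem sync_by_waiting {S Lbl : Type}
    (tr : S → Lbl → S → Prop) (w : S → S → ℕ) (cneg cpos : Lbl)
    (k1 k2 : ℕ) (hk : k1 ≤ k2) (ρ1 ρ2 : ℕ → S)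
    (h1neg : ∀ t < k1, tr (ρ1 t) cneg (ρ1 (t + 1)))
    (h1pos : tr (ρ1 k1) cpos (ρ1 (k1 + 1)))
    (h2neg : ∀ t < k2, tr (ρ2 t) cneg (ρ2 (t + 1)))
    (h2pos : tr (ρ2 k2) cpos (ρ2 (k2 + 1)))
    (hloop : tr (ρ1 0) cneg (ρ1 0))
    (hloopw : w (ρ1 0) (ρ1 0) = 0) :
    ∃ ρ1' : ℕ → S,
      (∀ t < k2 - k1, ρ1' t = ρ1 0) ∧
      (∀ t < k2, tr (ρ1' t) cneg (ρ1' (t + 1))) ∧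
      tr (ρ1' k2) cpos (ρ1' (k2 + 1)) ∧
      ρ1' (k2 + 1) = ρ1 (k1 + 1) ∧
      (∑ t ∈ Finset.range (k2 + 1), w (ρ1' t) (ρ1' (t + 1)))
        = ∑ t ∈ Finset.range (k1 + 1), w (ρ1 t) (ρ1 (t + 1)) := by
  refine ⟨fun t => ρ1 (t - (k2 - k1)), ?_, ?_, ?_, ?_, ?_⟩
  · intro t ht
    show ρ1 (t - (k2 - k1)) = ρ1 0
    have : t - (k2 - k1) = 0 := by omega
    rw [this]
  · intro t ht
    show tr (ρ1 (t - (k2 - k1))) cneg (ρ1 (t + 1 - (k2 - k1)))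
    by_cases h : t + 1 ≤ k2 - k1
    · have h1 : t - (k2 - k1) = 0 := by omega
      have h2 : t + 1 - (k2 - k1) = 0 := by omega
      rw [h1, h2]; exact hloop
    · have h2 : t + 1 - (k2 - k1) = (t - (k2 - k1)) + 1 := by omega
      rw [h2]
      exact h1neg (t - (k2 - k1)) (by omega)
  · show tr (ρ1 (k2 - (k2 - k1))) cpos (ρ1 (k2 + 1 - (k2 - k1)))
    have h1 : k2 - (k2 - k1) = k1 := by omega
    have h2 : k2 + 1 - (k2 - k1) = k1 + 1 := by omega
    rw [h1, h2]; exact h1pos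
  · show ρ1 (k2 + 1 - (k2 - k1)) = ρ1 (k1 + 1)
    congr 1; omega
  · have hsplit : k2 + 1 = (k2 - k1) + (k1 + 1) := by omega
    rw [hsplit, Finset.sum_range_add]
    have hz : ∀ i ∈ Finset.range (k2 - k1),
        w (ρ1 (i - (k2 - k1))) (ρ1 (i + 1 - (k2 - k1))) = 0 := by
      intro i hi
      simp only [Finset.mem_range] at hi
      have h1 : i - (k2 - k1) = 0 := by omega
      have h2 : i + 1 - (k2 - k1) = 0 := by omega
      rw [h1, h2, hloopw]
    rw [Finset.sum_eq_zero hz, zero_add]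
    apply Finset.sum_congr rfl
    intro i _
    show w (ρ1 ((k2 - k1) + i - (k2 - k1))) (ρ1 ((k2 - k1) + i + 1 - (k2 - k1))) = _
    have h1 : (k2 - k1) + i - (k2 - k1) = i := by omega
    have h2 : (k2 - k1) + i + 1 - (k2 - k1) = i + 1 := by omega
    rw [h1, h2]
end
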